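/- arXiv:2108.03860 — 3 statements merged into one kernel-verified Lean document; each statement's English description precedes it below -/
import Mathlib

section
/- Suppose f, g : ℝ^d × ℝ^d → ℝ^{d}, ℝ^{d×m} satisfy 2⟨x, f(x,y)⟩ + |g(x,y)|² ≤ K₁(1 + |x|² + |y|²) − K₂|x|^β + K₃|y|^β for all x, y, with K₁ > 0, K₂ ≥ K₃ ≥ 0, β > 2. Let π be the radial truncation onto the ball of radius R ≥ μ⁻¹(φ(1)) > 0 and set f_Δ(x,y) = f(π(x),π(y)), g_Δ(x,y) = g(π(x),π(y)). Then 2⟨x, f_Δ(x,y)⟩ + |g_Δ(x,y)|² ≤ 2K₁(1 ∨ (1/μ⁻¹(φ(1))))(1 + |x|² + |y|²) − K₂|π(x)|^β + K₃|π(y)|^β for all x, y ∈ ℝ^d. -/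
open Classical
open scoped RealInnerProductSpace

set_option maxHeartbeats 1000000 in
theorem truncated_coefficients_preserve_khasminskii
    (d m : ℕ) (K₁ K₂ K₃ β c R : ℝ)
    (f : EuclideanSpace ℝ (Fin d) → EuclideanSpace ℝ (Fin d) → EuclideanSpace ℝ (Fin d))
    (g : EuclideanSpace ℝ (Fin d) → EuclideanSpace ℝ (Fin d) → EuclideanSpace ℝ (Fin d × Fin m))
    (hK₁ : 0 < K₁) (hK₂₃ : K₂ ≥ K₃) (hK₃ : K₃ ≥ 0) (hβ : 2 < β)
    (hKh : ∀ x y, 2 * ⟪x, f x y⟫ + ‖g x y‖ ^ 2 ≤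
      K₁ * (1 + ‖x‖ ^ 2 + ‖y‖ ^ 2) - K₂ * ‖x‖ ^ β + K₃ * ‖y‖ ^ β)
    (hc : 0 < c) (hR : c ≤ R)
    (π : EuclideanSpace ℝ (Fin d) → EuclideanSpace ℝ (Fin d))
    (hπ : ∀ x, π x = if x = 0 then 0 else ((min ‖x‖ R) / ‖x‖) • x) :
    ∀ x y, 2 * ⟪x, f (π x) (π y)⟫ + ‖g (π x) (π y)‖ ^ 2 ≤
      2 * K₁ * (max 1 (1 / c)) * (1 + ‖x‖ ^ 2 + ‖y‖ ^ 2)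
        - K₂ * ‖π x‖ ^ β + K₃ * ‖π y‖ ^ β := by
  have hR0 : 0 < R := lt_of_lt_of_le hc hR
  have hnorm : ∀ z, ‖π z‖ = min ‖z‖ R := by
    intro z
    rw [hπ z]
    by_cases hz : z = 0
    · simp [hz, min_eq_left hR0.le]
    · have hz0 : 0 < ‖z‖ := norm_pos_iff.mpr hz
      rw [if_neg hz, norm_smul, Real.norm_eq_abs,
        abs_of_nonneg (div_nonneg (le_min hz0.le hR0.le) hz0.le),
        div_mul_cancel₀ _ hz0.ne']
  have heq : ∀ z, z = (if ‖z‖ ≤ R then (1:ℝ) else ‖z‖ / R) • π z := by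
    intro z
    by_cases hz : z = 0
    · simp [hz, hπ]
    · have hz0 : 0 < ‖z‖ := norm_pos_iff.mpr hz
      rw [hπ z, if_neg hz, smul_smul]
      by_cases hle : ‖z‖ ≤ R
      · rw [if_pos hle, min_eq_left hle, one_mul, div_self hz0.ne', one_smul]
      · rw [if_neg hle, min_eq_right (le_of_not_ge hle)]
        rw [div_mul_div_comm, mul_comm, div_self (by positivity), one_smul]
  intro x y
  set M := max 1 (1 / c) with hM
  have hM1 : (1:ℝ) ≤ M := le_max_left _ _
  have hMc : 1 / c ≤ M := le_max_right _ _
  set lam := (if ‖x‖ ≤ R then (1:ℝ) else ‖x‖ / R) with hlam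
  have hlam1 : 1 ≤ lam := by
    rw [hlam]
    split
    · exact le_refl 1
    · exact le_of_lt ((one_lt_div hR0).mpr (lt_of_not_ge (by assumption)))
  have hlam0 : 0 ≤ lam := le_trans zero_le_one hlam1
  have hinner : ⟪x, f (π x) (π y)⟫ = lam * ⟪π x, f (π x) (π y)⟫ := by
    have key : ∀ v : EuclideanSpace ℝ (Fin d), ⟪x, v⟫ = lam * ⟪π x, v⟫ := by
      intro v
      conv_lhs => rw [heq x]
      rw [real_inner_smul_left, ← hlam]
    exact key _
  have hkey := hKh (π x) (π y)
  have hg : 0 ≤ ‖g (π x) (π y)‖ ^ 2 := by positivity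
  have hpx : ‖π x‖ = min ‖x‖ R := hnorm x
  have hpy : ‖π y‖ = min ‖y‖ R := hnorm y
  have hpxx : ‖π x‖ ≤ ‖x‖ := by rw [hpx]; exact min_le_left _ _
  have hpyy : ‖π y‖ ≤ ‖y‖ := by rw [hpy]; exact min_le_left _ _
  have hpxR : ‖π x‖ ≤ R := by rw [hpx]; exact min_le_right _ _
  have hpyR : ‖π y‖ ≤ R := by rw [hpy]; exact min_le_right _ _
  have hβ0 : 0 ≤ β := by linarith
  -- step 1
  have step1 : 2 * ⟪x, f (π x) (π y)⟫ + ‖g (π x) (π y)‖ ^ 2 ≤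
      lam * (2 * ⟪π x, f (π x) (π y)⟫ + ‖g (π x) (π y)‖ ^ 2) := by
    rw [hinner]
    nlinarith [hg, hlam1]
  have step2 : lam * (2 * ⟪π x, f (π x) (π y)⟫ + ‖g (π x) (π y)‖ ^ 2) ≤
      lam * (K₁ * (1 + ‖π x‖ ^ 2 + ‖π y‖ ^ 2) - K₂ * ‖π x‖ ^ β + K₃ * ‖π y‖ ^ β) :=
    mul_le_mul_of_nonneg_left hkey hlam0
  -- the rpow part
  have step3 : lam * (- K₂ * ‖π x‖ ^ β + K₃ * ‖π y‖ ^ β) ≤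
      - K₂ * ‖π x‖ ^ β + K₃ * ‖π y‖ ^ β := by
    rcases eq_or_lt_of_le hlam1 with h | h
    · rw [← h, one_mul]
    · have hxR : ¬ ‖x‖ ≤ R := by
        by_contra hle
        rw [hlam, if_pos hle] at h
        exact lt_irrefl _ h
      have hpxR' : ‖π x‖ = R := by
        rw [hpx, min_eq_right (le_of_lt (lt_of_not_ge hxR))]
      have hyx : ‖π y‖ ^ β ≤ ‖π x‖ ^ β := by
        apply Real.rpow_le_rpow (norm_nonneg _) _ hβ0
        rw [hpxR']; exact hpyR
      have h1 : K₃ * ‖π y‖ ^ β ≤ K₂ * ‖π x‖ ^ β := by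
        calc K₃ * ‖π y‖ ^ β ≤ K₃ * ‖π x‖ ^ β :=
              mul_le_mul_of_nonneg_left hyx hK₃
          _ ≤ K₂ * ‖π x‖ ^ β := by
              apply mul_le_mul_of_nonneg_right hK₂₃ (Real.rpow_nonneg (norm_nonneg _) β)
      nlinarith [h1, hlam1]
  -- the quadratic part
  have step4 : lam * (K₁ * (1 + ‖π x‖ ^ 2 + ‖π y‖ ^ 2)) ≤
      2 * K₁ * M * (1 + ‖x‖ ^ 2 + ‖y‖ ^ 2) := by
    have hS : lam * (1 + ‖π x‖ ^ 2 + ‖π y‖ ^ 2) ≤ 2 * M * (1 + ‖x‖ ^ 2 + ‖y‖ ^ 2) := by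
      by_cases hle : ‖x‖ ≤ R
      · have : lam = 1 := by rw [hlam, if_pos hle]
        rw [this, one_mul]
        have h1 : ‖π x‖ ^ 2 ≤ ‖x‖ ^ 2 := pow_le_pow_left₀ (norm_nonneg _) hpxx 2
        have h2 : ‖π y‖ ^ 2 ≤ ‖y‖ ^ 2 := pow_le_pow_left₀ (norm_nonneg _) hpyy 2
        have hpos : (0:ℝ) < 1 + ‖x‖ ^ 2 + ‖y‖ ^ 2 := by positivity
        nlinarith [mul_nonneg (sub_nonneg.mpr hM1) hpos.le]
      · have hlamv : lam = ‖x‖ / R := by rw [hlam, if_neg hle]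
        have hxR : R < ‖x‖ := lt_of_not_ge hle
        have hpxR' : ‖π x‖ = R := by rw [hpx, min_eq_right hxR.le]
        rw [hlamv, hpxR', div_mul_eq_mul_div, div_le_iff₀ hR0]
        have hMc' : 1 ≤ M * c := (div_le_iff₀ hc).mp hMc
        have hpy0 : 0 ≤ ‖π y‖ := norm_nonneg _
        have hx0 : 0 ≤ ‖x‖ := norm_nonneg _
        have hy0 : 0 ≤ ‖y‖ := norm_nonneg _
        have hMR : 1 ≤ M * R := by nlinarith [hMc', hM1, hR, hc]
        have hM0 : 0 ≤ M := le_trans zero_le_one hM1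
        have t1 : 2 * ‖x‖ ≤ M * R * (1 + ‖x‖ ^ 2) := by
          nlinarith [sq_nonneg (‖x‖ - 1), mul_nonneg (sub_nonneg.mpr hMR)
            (add_nonneg zero_le_one (sq_nonneg ‖x‖))]
        have t2 : ‖x‖ * R ^ 2 ≤ M * R * ‖x‖ ^ 2 := by
          nlinarith [mul_nonneg (mul_nonneg (sub_nonneg.mpr hM1) hR0.le) (sq_nonneg ‖x‖),
            mul_nonneg (mul_nonneg hR0.le hx0) (sub_nonneg.mpr hxR.le)]
        have t3 : 2 * (‖x‖ * ‖π y‖ ^ 2) ≤ M * R * (‖x‖ ^ 2 + ‖y‖ ^ 2) := by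
          nlinarith [mul_nonneg hx0 (mul_nonneg hpy0 (sub_nonneg.mpr hpyR)),
            mul_nonneg (mul_nonneg hx0 hR0.le) (sub_nonneg.mpr hpyy),
            mul_nonneg hR0.le (sq_nonneg (‖x‖ - ‖y‖)),
            mul_nonneg (mul_nonneg (sub_nonneg.mpr hM1) hR0.le)
              (add_nonneg (sq_nonneg ‖x‖) (sq_nonneg ‖y‖))]
        have s0 : 0 ≤ M * R * (1 + ‖y‖ ^ 2) :=
          mul_nonneg (mul_nonneg hM0 hR0.le) (add_nonneg zero_le_one (sq_nonneg ‖y‖))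
        nlinarith [t1, t2, t3, s0]
    calc lam * (K₁ * (1 + ‖π x‖ ^ 2 + ‖π y‖ ^ 2))
        = K₁ * (lam * (1 + ‖π x‖ ^ 2 + ‖π y‖ ^ 2)) := by ring
      _ ≤ K₁ * (2 * M * (1 + ‖x‖ ^ 2 + ‖y‖ ^ 2)) :=
          mul_le_mul_of_nonneg_left hS hK₁.le
      _ = 2 * K₁ * M * (1 + ‖x‖ ^ 2 + ‖y‖ ^ 2) := by ring
  calc 2 * ⟪x, f (π x) (π y)⟫ + ‖g (π x) (π y)‖ ^ 2
      ≤ lam * (K₁ * (1 + ‖π x‖ ^ 2 + ‖π y‖ ^ 2) - K₂ * ‖π x‖ ^ β + K₃ * ‖π y‖ ^ β) :=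
        le_trans step1 step2
    _ = lam * (K₁ * (1 + ‖π x‖ ^ 2 + ‖π y‖ ^ 2)) + lam * (- K₂ * ‖π x‖ ^ β + K₃ * ‖π y‖ ^ β) := by
        ring
    _ ≤ 2 * K₁ * M * (1 + ‖x‖ ^ 2 + ‖y‖ ^ 2) + (- K₂ * ‖π x‖ ^ β + K₃ * ‖π y‖ ^ β) :=
        add_le_add step4 step3
    _ = 2 * K₁ * M * (1 + ‖x‖ ^ 2 + ‖y‖ ^ 2) - K₂ * ‖π x‖ ^ β + K₃ * ‖π y‖ ^ β := by ring
end

section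
/- Let δ : [0,∞) → [0,τ] be continuously differentiable with |δ'(t)| ≤ δ̂ for all t ≥ 0, where δ̂ ∈ [0,1). Fix a step size Δ > 0 and define δ_k = ⌊δ(kΔ)/Δ⌋ for integers k ≥ 0. Then for every integer u, the number of indices j ∈ {0,1,2,…} with j − δ_j = u is at most ⌊(1 − δ̂)⁻¹⌋ + 1. -/
theorem delayed_index_multiplicity_bound
    (τ Δ δhat : ℝ) (δ δ' : ℝ → ℝ)
    (hτ : 0 < τ) (hΔ : 0 < Δ)
    (hδrange : ∀ t ≥ (0 : ℝ), δ t ∈ Set.Icc 0 τ)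
    (hderiv : ∀ t ≥ (0 : ℝ), HasDerivAt δ (δ' t) t)
    (hcont : ContinuousOn δ' (Set.Ici 0))
    (hδhat : δhat ∈ Set.Ico (0 : ℝ) 1)
    (hbound : ∀ t ≥ (0 : ℝ), |δ' t| ≤ δhat) :
    ∀ u : ℤ,
      {j : ℕ | (j : ℤ) - ⌊δ (j * Δ) / Δ⌋ = u}.Finite ∧
      {j : ℕ | (j : ℤ) - ⌊δ (j * Δ) / Δ⌋ = u}.ncard ≤ ⌊(1 - δhat)⁻¹⌋₊ + 1 := by
  classical
  intro u
  set M := ⌊(1 - δhat)⁻¹⌋₊ with hM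
  set S : Set ℕ := {j : ℕ | (j : ℤ) - ⌊δ (j * Δ) / Δ⌋ = u} with hSdef
  have h1δ : (0:ℝ) < 1 - δhat := by linarith [hδhat.2]
  -- key gap bound
  have key : ∀ j ∈ S, ∀ j' ∈ S, j ≤ j' → j' ≤ j + M := by
    intro j hj j' hj' hle
    have hmvt : ‖δ ((j':ℝ) * Δ) - δ ((j:ℝ) * Δ)‖ ≤ δhat * ‖(j':ℝ)*Δ - (j:ℝ)*Δ‖ := by
      refine Convex.norm_image_sub_le_of_norm_hasDerivWithin_le
        (f := δ) (f' := δ') (s := Set.Ici (0:ℝ))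
        (fun t ht => (hderiv t ht).hasDerivWithinAt)
        (fun t ht => hbound t ht) (convex_Ici 0) ?_ ?_
      · exact Set.mem_Ici.mpr (by positivity)
      · exact Set.mem_Ici.mpr (by positivity)
    have hd : ((j':ℝ) - (j:ℝ)) * Δ ≥ 0 := by
      have : (j:ℝ) ≤ (j':ℝ) := by exact_mod_cast hle
      nlinarith
    have hmvt' : δ ((j':ℝ) * Δ) - δ ((j:ℝ) * Δ) ≤ δhat * (((j':ℝ) - (j:ℝ)) * Δ) := by
      have h2 : ‖(j':ℝ)*Δ - (j:ℝ)*Δ‖ = ((j':ℝ) - (j:ℝ)) * Δ := by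
        rw [Real.norm_eq_abs, abs_of_nonneg (by linarith [hd])]; ring
      calc δ ((j':ℝ) * Δ) - δ ((j:ℝ) * Δ) ≤ ‖δ ((j':ℝ) * Δ) - δ ((j:ℝ) * Δ)‖ :=
            le_abs_self _
        _ ≤ δhat * ‖(j':ℝ)*Δ - (j:ℝ)*Δ‖ := hmvt
        _ = δhat * (((j':ℝ) - (j:ℝ)) * Δ) := by rw [h2]
    -- floor relation
    have hb : (⌊δ ((j':ℝ) * Δ) / Δ⌋ : ℤ) - ⌊δ ((j:ℝ) * Δ) / Δ⌋ = (j':ℤ) - (j:ℤ) := by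
      have h1 : (j:ℤ) - ⌊δ ((j:ℝ) * Δ) / Δ⌋ = u := hj
      have h2 : (j':ℤ) - ⌊δ ((j':ℝ) * Δ) / Δ⌋ = u := hj'
      omega
    have hfl1 : (⌊δ ((j':ℝ) * Δ) / Δ⌋ : ℝ) ≤ δ ((j':ℝ) * Δ) / Δ := Int.floor_le _
    have hfl2 : δ ((j:ℝ) * Δ) / Δ - 1 < (⌊δ ((j:ℝ) * Δ) / Δ⌋ : ℝ) := by
      linarith [Int.lt_floor_add_one (δ ((j:ℝ) * Δ) / Δ)]
    have hdiff : ((j':ℝ) - (j:ℝ)) ≤ δhat * ((j':ℝ) - (j:ℝ)) + 1 := by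
      have hcast : ((j':ℝ) - (j:ℝ)) = ((⌊δ ((j':ℝ) * Δ) / Δ⌋ : ℝ) - (⌊δ ((j:ℝ) * Δ) / Δ⌋ : ℝ)) := by
        exact_mod_cast congrArg (fun z : ℤ => (z:ℝ)) hb.symm
      have hdivle : δ ((j':ℝ) * Δ) / Δ - δ ((j:ℝ) * Δ) / Δ ≤ δhat * ((j':ℝ) - (j:ℝ)) := by
        rw [div_sub_div_same, div_le_iff₀ hΔ]
        calc δ ((j':ℝ) * Δ) - δ ((j:ℝ) * Δ) ≤ δhat * (((j':ℝ) - (j:ℝ)) * Δ) := hmvt'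
          _ = δhat * ((j':ℝ) - (j:ℝ)) * Δ := by ring
      linarith
    have hreal : ((j' - j : ℕ) : ℝ) ≤ (1 - δhat)⁻¹ := by
      have hc : ((j' - j : ℕ) : ℝ) = (j':ℝ) - (j:ℝ) := by
        push_cast [Nat.cast_sub hle]; ring
      rw [hc, show (1 - δhat)⁻¹ = 1/(1-δhat) by ring, le_div_iff₀ h1δ]
      nlinarith
    have : j' - j ≤ M := Nat.le_floor hreal
    omega
  by_cases hne : S.Nonempty
  · obtain ⟨n, hn⟩ := hne
    have hP : ∃ m, m ∈ S := ⟨n, hn⟩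
    let j₀ := Nat.find hP
    have hj₀ : j₀ ∈ S := Nat.find_spec hP
    have hsub : S ⊆ Set.Icc j₀ (j₀ + M) := by
      intro j hjS
      have hge : j₀ ≤ j := Nat.find_le hjS
      exact ⟨hge, key j₀ hj₀ j hjS hge⟩
    have hfin : S.Finite := (Set.finite_Icc _ _).subset hsub
    refine ⟨hfin, ?_⟩
    calc S.ncard ≤ (Set.Icc j₀ (j₀ + M)).ncard :=
          Set.ncard_le_ncard hsub (Set.finite_Icc _ _)
      _ = M + 1 := by
          rw [← Finset.coe_Icc, Set.ncard_coe_finset, Nat.card_Icc]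
          omega
  · rw [Set.not_nonempty_iff_eq_empty] at hne
    rw [hne]
    simp
end

section
/- For all real x₁, x₂, y₁, y₂: (x₁−x₂)((−9x₁³ + |y₁|^{3/2}) − (−9x₂³ + |y₂|^{3/2})) ≤ −4.5(x₁² + x₂²)(x₁−x₂)² + 0.5(x₁−x₂)² + 2.25(y₁−y₂)² + 2.25(y₁² + y₂²)(y₁−y₂)². -/
lemma rpow_three_half_eq_sqrt_cube (a : ℝ) (ha : 0 ≤ a) :
    a ^ ((3 : ℝ) / 2) = Real.sqrt a ^ 3 := by
  rw [Real.sqrt_eq_rpow, ← Real.rpow_natCast (a ^ ((1:ℝ)/2)) 3, ← Real.rpow_mul ha]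
  norm_num

lemma key_pow (a b : ℝ) (ha : 0 ≤ a) (hb : 0 ≤ b) :
    (a ^ ((3 : ℝ) / 2) - b ^ ((3 : ℝ) / 2)) ^ 2 ≤ (9/4) * (a + b) * (a - b) ^ 2 := by
  rw [rpow_three_half_eq_sqrt_cube a ha, rpow_three_half_eq_sqrt_cube b hb]
  set s := Real.sqrt a with hs
  set t := Real.sqrt b with ht
  have hs0 : 0 ≤ s := Real.sqrt_nonneg a
  have ht0 : 0 ≤ t := Real.sqrt_nonneg b
  have ha' : a = s ^ 2 := (Real.sq_sqrt ha).symm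
  have hb' : b = t ^ 2 := (Real.sq_sqrt hb).symm
  rw [ha', hb']
  nlinarith [sq_nonneg (s - t), sq_nonneg (s + t), mul_nonneg hs0 ht0,
    sq_nonneg (s*t), mul_nonneg (mul_nonneg hs0 hs0) (mul_nonneg hs0 ht0),
    mul_nonneg (mul_nonneg hs0 ht0) (mul_nonneg ht0 ht0),
    sq_nonneg (s^2 - t^2), mul_nonneg (mul_nonneg hs0 ht0) (sq_nonneg (s - t))]

theorem example1_drift_monotonicity
    (x₁ x₂ y₁ y₂ : ℝ) :
    (x₁ - x₂) * ((-9 * x₁ ^ 3 + |y₁| ^ ((3 : ℝ) / 2)) - (-9 * x₂ ^ 3 + |y₂| ^ ((3 : ℝ) / 2))) ≤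
      -4.5 * (x₁ ^ 2 + x₂ ^ 2) * (x₁ - x₂) ^ 2 + 0.5 * (x₁ - x₂) ^ 2
        + 2.25 * (y₁ - y₂) ^ 2 + 2.25 * (y₁ ^ 2 + y₂ ^ 2) * (y₁ - y₂) ^ 2 := by
  set A := |y₁| ^ ((3 : ℝ) / 2) with hA
  set B := |y₂| ^ ((3 : ℝ) / 2) with hB
  have h1 : (A - B) ^ 2 ≤ (9/4) * (|y₁| + |y₂|) * (|y₁| - |y₂|) ^ 2 :=
    key_pow _ _ (abs_nonneg _) (abs_nonneg _)
  have h2 : (|y₁| - |y₂|) ^ 2 ≤ (y₁ - y₂) ^ 2 := by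
    have := abs_abs_sub_abs_le_abs_sub y₁ y₂
    have h3 : |(|y₁| - |y₂|)| ^ 2 ≤ |y₁ - y₂| ^ 2 :=
      pow_le_pow_left₀ (abs_nonneg _) this 2
    simpa [sq_abs] using h3
  have h4 : |y₁| + |y₂| ≤ 1 + y₁ ^ 2 + y₂ ^ 2 := by
    nlinarith [sq_nonneg (|y₁| - 1), sq_nonneg (|y₂| - 1), sq_abs y₁, sq_abs y₂]
  have h5 : (A - B) ^ 2 ≤ (9/4) * (1 + y₁ ^ 2 + y₂ ^ 2) * (y₁ - y₂) ^ 2 := by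
    calc (A - B) ^ 2 ≤ (9/4) * (|y₁| + |y₂|) * (|y₁| - |y₂|) ^ 2 := h1
      _ ≤ (9/4) * (1 + y₁ ^ 2 + y₂ ^ 2) * (y₁ - y₂) ^ 2 := by
          have h6 : (9/4) * (|y₁| + |y₂|) * (|y₁| - |y₂|) ^ 2 ≤
              (9/4) * (1 + y₁ ^ 2 + y₂ ^ 2) * (|y₁| - |y₂|) ^ 2 := by
            apply mul_le_mul_of_nonneg_right _ (sq_nonneg _)
            nlinarith [abs_nonneg y₁, abs_nonneg y₂]
          have h7 : (9/4) * (1 + y₁ ^ 2 + y₂ ^ 2) * (|y₁| - |y₂|) ^ 2 ≤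
              (9/4) * (1 + y₁ ^ 2 + y₂ ^ 2) * (y₁ - y₂) ^ 2 := by
            apply mul_le_mul_of_nonneg_left h2
            positivity
          linarith
  nlinarith [sq_nonneg (x₁ - x₂ - (A - B)), sq_nonneg ((x₁ + x₂) * (x₁ - x₂)),
    sq_nonneg (x₁ - x₂), sq_nonneg (x₁ + x₂), sq_nonneg (x₁*x₂*(x₁ - x₂))]
end
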